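/- If a biologically meaningful infected fixed point is saturated (its regulated set equals the set of ≻-maximal stages), then it is moderated: S*_k < b for every unregulated stage k. -/

import Mathlib

/-- Follow-on factor `M_j = r_j f_j / (a_{j+1} + f_{j+1})`. -/
noncomputable def Mfac {n : ℕ} (r f a : ZMod n → ℝ) (j : ZMod n) : ℝ :=
  r j * f j / (a (j + 1) + f (j + 1))

/-- Cyclic product `M_{jk} = ∏_{ℓ ∈ [j,k)} M_ℓ` (with `M_{jj} = 1`). -/
noncomputable def cycProd {n : ℕ} (M : ZMod n → ℝ) (j k : ZMod n) : ℝ :=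
  ∏ i ∈ Finset.range ((k - j).val), M (j + (i : ZMod n))

/-!
Let `h` be the regulated stage closest before an unregulated stage `k`. Along the arc from `h` to
`k` every stage is unregulated, so the fixed-point equations propagate `S*_h = b` multiplicatively
and `S*_k = M_{hk} b`; it remains to show `M_{hk} < 1`. This goes by induction along the arc: a
stage `m` on it is unregulated, hence starved by some `i`. If `i` lies on the arc between `h` and
`m`, then `M_{hm} = M_{hi} M_{im}` with both factors `< 1`; otherwise `h` lies between `i` and `m`,
and `M_{im} = M_{ih} M_{hm}` with `M_{ih} ≥ 1` because the regulated stage `h` is `≻`-maximal.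
A regulated stage exists at all because a fixed point with no regulated stage forces `R_0 = 1`.
-/

open Finset

namespace ZMod

variable {n : ℕ} [NeZero n]

theorem prod_range_add_natCast {β : Type*} [CommMonoid β] (g : ZMod n → β) (j : ZMod n) :
    ∏ i ∈ range n, g (j + i) = ∏ x, g x := by
  rw [← Fintype.prod_equiv (Equiv.addLeft j) (fun x ↦ g (j + x)) g fun _ ↦ rfl]
  exact prod_nbij' (fun i ↦ (i : ZMod n)) val (by simp) (by simp [val_lt])
    (fun i hi ↦ val_cast_of_lt (mem_range.1 hi)) (fun x _ ↦ natCast_zmod_val x)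
    (fun _ _ ↦ rfl)

/- `(m - j).val ≤ (k - j).val` says that `m` lies on the cyclic arc from `j` to `k`. -/

theorem val_sub_add_val_sub_of_le {j m k : ZMod n} (hm : (m - j).val ≤ (k - j).val) :
    (m - j).val + (k - m).val = (k - j).val := by
  rw [show k - m = (k - j) - (m - j) by abel, val_sub hm]
  omega

theorem val_sub_le_val_sub_of_lt {j m k : ZMod n} (hm : (k - j).val < (m - j).val) :
    (j - m).val ≤ (k - m).val := by
  have hmj : m - j ≠ 0 := fun h ↦ by simp [h] at hm
  have hneg : (j - m).val = n - (m - j).val := by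
    rw [← neg_sub, neg_val, if_neg hmj]
  have hsum := val_add (k - j) (j - m)
  rw [show k - j + (j - m) = k - m by abel, hneg] at hsum
  have := val_lt (m - j)
  rw [hsum, Nat.mod_eq_of_lt (by omega), hneg]
  omega

end ZMod

section CyclicProduct

variable {n : ℕ} {M : ZMod n → ℝ}

theorem cycProd_pos (hM : ∀ j, 0 < M j) (j k : ZMod n) : 0 < cycProd M j k :=
  prod_pos fun _ _ ↦ hM _

theorem cycProd_mul_cycProd [NeZero n] {j m k : ZMod n} (hm : (m - j).val ≤ (k - j).val) :
    cycProd M j m * cycProd M m k = cycProd M j k := by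
  unfold cycProd
  rw [← ZMod.val_sub_add_val_sub_of_le hm, prod_range_add]
  congr 1
  refine prod_congr rfl fun i _ ↦ ?_
  rw [Nat.cast_add, ZMod.natCast_zmod_val]
  ring_nf

theorem cycProd_lt_one_of_forall_starved [NeZero n] (hM : ∀ j, 0 < M j) {h k : ZMod n}
    (hmax : ∀ i, i ≠ h → 1 ≤ cycProd M i h)
    (hstarved : ∀ m, m ≠ h → (m - h).val ≤ (k - h).val →
      ∃ i, i ≠ m ∧ cycProd M i m < 1)
    {m : ZMod n} (hmh : m ≠ h) (hmk : (m - h).val ≤ (k - h).val) : cycProd M h m < 1 := by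
  induction hd : (m - h).val using Nat.strong_induction_on generalizing m with
  | _ d ih =>
    obtain ⟨i, him, hi⟩ := hstarved m hmh hmk
    by_cases hih : i = h
    · exact hih ▸ hi
    by_cases hi_arc : (i - h).val ≤ (m - h).val
    · have hlt : (i - h).val < d :=
        hd ▸ hi_arc.lt_of_ne fun e ↦ him (sub_left_inj.1 (ZMod.val_injective n e))
      rw [← cycProd_mul_cycProd hi_arc]
      exact mul_lt_one_of_nonneg_of_lt_one_left (cycProd_pos hM h i).le
        (ih _ hlt hih (hi_arc.trans hmk) rfl) hi.le
    · rw [← cycProd_mul_cycProd (ZMod.val_sub_le_val_sub_of_lt (not_le.1 hi_arc))] at hi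
      exact (le_mul_of_one_le_left (cycProd_pos hM h m).le (hmax i hih)).trans_lt hi

end CyclicProduct

section Propagation

variable {n : ℕ} {M S T : ZMod n → ℝ}

theorem eq_prod_range_mul (hstep : ∀ j, T j = 0 → S j = M (j - 1) * S (j - 1)) (j : ZMod n) :
    ∀ t : ℕ, (∀ i < t, T (j + (i + 1 : ℕ)) = 0) →
      S (j + t) = (∏ i ∈ range t, M (j + i)) * S j
  | 0, _ => by simp
  | t + 1, hT => by
    have hprev : j + ((t + 1 : ℕ) : ZMod n) - 1 = j + t := by push_cast; ring
    rw [hstep _ (hT t t.lt_succ_self), hprev,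
      eq_prod_range_mul hstep j t fun i hi ↦ hT i (hi.trans t.lt_succ_self), prod_range_succ]
    ring

theorem eq_cycProd_mul [NeZero n] (hstep : ∀ j, T j = 0 → S j = M (j - 1) * S (j - 1))
    {h k : ZMod n}
    (harc : ∀ m, m ≠ h → (m - h).val ≤ (k - h).val → T m = 0) :
    S k = cycProd M h k * S h := by
  have hprop := eq_prod_range_mul hstep h (k - h).val fun i hi ↦ by
    have hval : (h + ((i + 1 : ℕ) : ZMod n) - h).val = i + 1 := by
      rw [add_sub_cancel_left, ZMod.val_cast_of_lt (by have := ZMod.val_lt (k - h); omega)]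
    refine harc _ (fun e ↦ ?_) (by omega)
    rw [e, sub_self, ZMod.val_zero] at hval
    omega
  rwa [ZMod.natCast_zmod_val, add_sub_cancel] at hprop

theorem exists_ne_zero_of_prod_ne_one [NeZero n]
    (hstep : ∀ j, T j = 0 → S j = M (j - 1) * S (j - 1))
    (hM : ∏ j, M j ≠ 1) (hS : ∃ j, S j ≠ 0) : ∃ j, T j ≠ 0 := by
  by_contra! hT
  obtain ⟨j, hj⟩ := hS
  have hcycle := eq_prod_range_mul hstep j n fun i _ ↦ hT _
  rw [ZMod.natCast_self, add_zero, ZMod.prod_range_add_natCast M j] at hcycle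
  exact hM (mul_right_cancel₀ hj (by rw [one_mul, ← hcycle]))

end Propagation

theorem eq_Mfac_mul_of_eq_zero {n : ℕ} {r f a S T : ZMod n → ℝ} (haf : ∀ j, 0 < a j + f j)
    (hfix1 : ∀ j, r (j - 1) * f (j - 1) * S (j - 1) = S j * (a j + f j + T j))
    (j : ZMod n) (hT : T j = 0) : S j = Mfac r f a (j - 1) * S (j - 1) := by
  have hfix := hfix1 j
  rw [hT, add_zero] at hfix
  rw [Mfac, sub_add_cancel, div_mul_eq_mul_div, hfix, mul_div_cancel_right₀ _ (haf j).ne']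

theorem stmt12_general (n : ℕ) [NeZero n]
    (r f a S T : ZMod n → ℝ) (b : ℝ)
    (hr : ∀ j, 0 < r j) (hf : ∀ j, 0 < f j) (hb : 0 < b)
    (haf : ∀ j, 0 < a j + f j)
    (hfix1 : ∀ j, r (j - 1) * f (j - 1) * S (j - 1) = S j * (a j + f j + T j))
    (hfix2 : ∀ j, (S j - b) * T j = 0)
    (hinf : ∃ j, S j ≠ 0)
    (hR0 : 1 < ∏ j : ZMod n, Mfac r f a j)
    (hsat : ∀ j : ZMod n,
      T j ≠ 0 ↔ ∀ i : ZMod n, ¬ (i ≠ j ∧ cycProd (Mfac r f a) i j < 1)) :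
    ∀ k : ZMod n, T k = 0 → S k < b := by
  intro k hTk
  have hM : ∀ j, 0 < Mfac r f a j := fun j ↦ div_pos (mul_pos (hr j) (hf j)) (haf (j + 1))
  have hstep := eq_Mfac_mul_of_eq_zero haf hfix1
  obtain ⟨h, hTh, hclosest⟩ := Set.exists_min_image {j | T j ≠ 0} (fun j ↦ (k - j).val)
    (Set.toFinite _) (exists_ne_zero_of_prod_ne_one hstep hR0.ne' hinf)
  have hSh : S h = b := sub_eq_zero.1 ((mul_eq_zero.1 (hfix2 h)).resolve_right hTh)
  have harc : ∀ m, m ≠ h → (m - h).val ≤ (k - h).val → T m = 0 := fun m hmh hmk ↦ by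
    by_contra hTm
    have := ZMod.val_sub_add_val_sub_of_le hmk
    have := (ZMod.val_ne_zero _).2 (sub_ne_zero.2 hmh)
    have := hclosest m hTm
    omega
  have hmax : ∀ i, i ≠ h → 1 ≤ cycProd (Mfac r f a) i h :=
    fun i hih ↦ not_lt.1 fun hlt ↦ (hsat h).1 hTh i ⟨hih, hlt⟩
  have hstarved : ∀ m, m ≠ h → (m - h).val ≤ (k - h).val →
      ∃ i, i ≠ m ∧ cycProd (Mfac r f a) i m < 1 := fun m hmh hmk ↦ by
    by_contra! hnone
    exact (hsat m).2 (fun i hi ↦ (hnone i hi.1).not_gt hi.2) (harc m hmh hmk)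
  have hkh : k ≠ h := fun e ↦ hTh (e ▸ hTk)
  rw [eq_cycProd_mul hstep harc, hSh]
  exact mul_lt_of_lt_one_left hb (cycProd_lt_one_of_forall_starved hM hmax hstarved hkh le_rfl)

/-- Saturation implies moderation: if the regulated set equals the set of
≻-maximal stages, then S*_k < b at every unregulated stage k. -/
theorem stmt12 (n : ℕ) [NeZero n] (hn : 1 < n)
    (r f a S T : ZMod n → ℝ) (b : ℝ)
    (hr : ∀ j, 0 < r j) (hf : ∀ j, 0 < f j) (hb : 0 < b)
    (haf : ∀ j, 0 < a j + f j)
    (hfix1 : ∀ j, r (j - 1) * f (j - 1) * S (j - 1) = S j * (a j + f j + T j))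
    (hfix2 : ∀ j, (S j - b) * T j = 0)
    (hS : ∀ j, 0 ≤ S j) (hT : ∀ j, 0 ≤ T j)
    (hinf : ∃ j, S j ≠ 0)
    (hR0 : 1 < ∏ j : ZMod n, Mfac r f a j)
    (hgen : ∀ j k : ZMod n, j ≠ k → cycProd (Mfac r f a) j k ≠ 1)
    (hsat : ∀ j : ZMod n,
      T j ≠ 0 ↔ ∀ i : ZMod n, ¬ (i ≠ j ∧ cycProd (Mfac r f a) i j < 1)) :
    ∀ k : ZMod n, T k = 0 → S k < b :=
  stmt12_general n r f a S T b hr hf hb haf hfix1 hfix2 hinf hR0 hsat
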